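/- arXiv:1309.1290 — 3 statements merged into one kernel-verified Lean document; each statement's English description precedes it below -/
import Mathlib

section
/- Let β ∈ L. Let P be the graph product over the subgraph of (L, I) induced by L ∖ {β}, let A be the graph product over the subgraph induced by the link of β, i.e. {α ∈ L ∖ {β} : (α, β) ∈ I}, and let B = G_β. Then the canonical homomorphisms from P and from A × B into G induce an isomorphism from the amalgamated free product P ⋆_A (A × B) — the pushout of the canonical homomorphism A → P and the homomorphism A → A × B, a ↦ (a, 1) — onto the graph product G. -/
/-!
Both groups are given by generators and relations, so it suffices to write down homomorphisms in
both directions on generators and check that they are mutually inverse there. The amalgam maps to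
`G` because the image of the link subgroup `A` commutes with `G_β`, which is checked on the
generators of `A`. Conversely, `G_α` (for `α ≠ β`) goes into `P` and `G_β` into the factor `B` of
`A × B`; the commutation relations of `G` hold because a link node is identified, in the amalgam,
with its copy in `A × B`, where it commutes with `B`.
-/

/-- The set of commutator relators defining a graph product. -/
def gpRels {L : Type} (I : L → L → Prop) (G : L → Type) [∀ α, Group (G α)] :
    Set (Monoid.CoprodI G) :=
  {x | ∃ (α β : L) (g : G α) (h : G β), I α β ∧
    x = Monoid.CoprodI.of g * Monoid.CoprodI.of h *
        (Monoid.CoprodI.of g)⁻¹ * (Monoid.CoprodI.of h)⁻¹}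

/-- The graph product of the groups `G α` over the independence relation `I`. -/
def GP {L : Type} (I : L → L → Prop) (G : L → Type) [∀ α, Group (G α)] : Type :=
  Monoid.CoprodI G ⧸ Subgroup.normalClosure (gpRels I G)

instance {L : Type} (I : L → L → Prop) (G : L → Type) [∀ α, Group (G α)] :
    Group (GP I G) := QuotientGroup.Quotient.group _

/-- The canonical homomorphism of a node group into the graph product. -/
def gpOf {L : Type} (I : L → L → Prop) (G : L → Type) [∀ α, Group (G α)] (α : L) :
    G α →* GP I G :=
  (QuotientGroup.mk' _).comp Monoid.CoprodI.of

/-- A letter: a nontrivial element of one of the node groups. -/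
abbrev Letter (L : Type) (G : L → Type) [∀ α, Group (G α)] : Type :=
  Σ α : L, {g : G α // g ≠ 1}

variable {L : Type} (I : L → L → Prop) (G : L → Type) [∀ α, Group (G α)]

/-- The element of the graph product represented by a word. -/
def evalWord (w : List (Letter L G)) : GP I G :=
  (w.map fun l => gpOf I G l.1 l.2.1).prod

/-- One elementary commutation step between trace-equivalent words. -/
inductive TraceStep : List (Letter L G) → List (Letter L G) → Prop
  | swap (u v : List (Letter L G)) (a b : Letter L G) (h : I a.1 b.1) :
      TraceStep (u ++ a :: b :: v) (u ++ b :: a :: v)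

/-- Trace equivalence: the congruence generated by commuting independent letters. -/
def TraceEquiv : List (Letter L G) → List (Letter L G) → Prop :=
  Relation.EqvGen (TraceStep I G)

/-- `IndepWord I G β u` means every letter of `u` is independent of `β`,
i.e. `u ∈ I(β)`. -/
def IndepWord (β : L) (u : List (Letter L G)) : Prop := ∀ c ∈ u, I c.1 β

/-- A word is reduced if it contains no factor `b u b'` with `b, b' ∈ Γ_β`
and `u ∈ I(β)`. -/
def Reduced (w : List (Letter L G)) : Prop :=
  ¬ ∃ (β : L) (b b' : {g : G β // g ≠ 1}) (x u y : List (Letter L G)),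
      w = x ++ (⟨β, b⟩ : Letter L G) :: (u ++ (⟨β, b'⟩ : Letter L G) :: y) ∧
      IndepWord I G β u

/-- `|w|_α` : number of letters of `w` in `Γ_α`. -/
noncomputable def countAlpha (α : L) (w : List (Letter L G)) : ℕ :=
  (w.filter fun l => Classical.propDecidable (l.1 = α) |>.decide).length

/-- The alphabet `al(w)` of a word. -/
def alph (w : List (Letter L G)) : Set L := {α | ∃ l ∈ w, l.1 = α}

/-- A reduced word is cyclically reduced if it has no factorization `≡ a v a'`
with `a, a'` letters from the same node group. -/
def IsCyclicallyReduced (w : List (Letter L G)) : Prop :=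
  Reduced I G w ∧
  ¬ ∃ (α : L) (a a' : {g : G α // g ≠ 1}) (v : List (Letter L G)),
      TraceEquiv I G w ((⟨α, a⟩ : Letter L G) :: (v ++ [(⟨α, a'⟩ : Letter L G)]))

/-- Words `u` and `v` are transposed if `u ≡ r s` and `v ≡ s r`. -/
def Transposed (u v : List (Letter L G)) : Prop :=
  ∃ r s : List (Letter L G), TraceEquiv I G u (r ++ s) ∧ TraceEquiv I G v (s ++ r)

/-- `u ≈ v` : the reflexive-transitive closure of transposition. -/
def TransClosure : List (Letter L G) → List (Letter L G) → Prop :=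
  Relation.ReflTransGen (Transposed I G)

/-- The formal inverse of a letter. -/
def letterInv (l : Letter L G) : Letter L G :=
  ⟨l.1, ⟨(l.2 : G l.1)⁻¹, inv_ne_one.mpr l.2.2⟩⟩

/-- The formal inverse `p̄` of a word `p`. -/
def wordInv (w : List (Letter L G)) : List (Letter L G) :=
  (w.map (letterInv G)).reverse

/-- The dependence graph on `L`: distinct nodes are adjacent iff not independent. -/
def depGraph : SimpleGraph L where
  Adj a b := a ≠ b ∧ ¬ I a b ∧ ¬ I b a
  symm := by
    constructor
    intro a b ⟨h1, h2, h3⟩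
    exact ⟨h1.symm, h3, h2⟩
  loopless := by constructor; intro a ⟨h1, _⟩; exact h1 rfl

/-- A word is connected if its alphabet induces a connected subgraph of the
dependence graph. -/
def ConnectedWord (w : List (Letter L G)) : Prop :=
  ((depGraph I).induce (alph G w)).Connected

/-- A word `w` is `α`-reduced if every word with fewer letters from `Γ_α`
represents a different element of the graph product. -/
def AlphaReduced (α : L) (w : List (Letter L G)) : Prop :=
  ∀ w' : List (Letter L G), countAlpha G α w' < countAlpha G α w →
    evalWord I G w' ≠ evalWord I G w

/-- The two-element family of groups `{P, Q}` indexed by `Bool`, used to form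
the amalgamated product `P ⋆_A Q` as an indexed pushout. -/
def amalFam (P Q : Type) : Bool → Type
  | true => P
  | false => Q

instance (P Q : Type) [Group P] [Group Q] (i : Bool) : Group (amalFam P Q i) := by
  cases i <;> dsimp [amalFam] <;> infer_instance

/-- Restriction of the independence relation to a subset of the nodes. -/
abbrev restI {L : Type} (I : L → L → Prop) (Q : L → Prop) :
    {α : L // Q α} → {α : L // Q α} → Prop :=
  fun a b => I a.1 b.1

/-- Restriction of the family of node groups to a subset of the nodes. -/
abbrev restG {L : Type} (G : L → Type) (Q : L → Prop) : {α : L // Q α} → Type :=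
  fun a => G a.1

namespace GP

variable {I G}

theorem commute_gpOf {α α' : L} (h : I α α') (g : G α) (g' : G α') :
    Commute (gpOf I G α g) (gpOf I G α' g') := by
  have hrel : (QuotientGroup.mk' _ : Monoid.CoprodI G →* GP I G)
      (.of g * .of g' * (.of g)⁻¹ * (.of g')⁻¹) = 1 :=
    (QuotientGroup.eq_one_iff _).2 (Subgroup.subset_normalClosure ⟨α, α', g, g', h, rfl⟩)
  rwa [map_mul, map_mul, map_mul, map_inv, map_inv, mul_inv_eq_one, mul_inv_eq_iff_eq_mul]
    at hrel

theorem hom_ext {K : Type*} [Group K] {f f' : GP I G →* K}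
    (h : ∀ α (g : G α), f (gpOf I G α g) = f' (gpOf I G α g)) : f = f' :=
  QuotientGroup.monoidHom_ext _ <| Monoid.CoprodI.ext_hom _ _ fun α => MonoidHom.ext (h α)

def lift {K : Type*} [Group K] (f : ∀ α, G α →* K)
    (hf : ∀ α α' (g : G α) (g' : G α'), I α α' → Commute (f α g) (f α' g')) : GP I G →* K :=
  QuotientGroup.lift _ (Monoid.CoprodI.lift f) <| Subgroup.normalClosure_le_normal <| by
    rintro _ ⟨α, α', g, g', h, rfl⟩
    simp [(hf α α' g g' h).eq]

@[simp]
theorem lift_of {K : Type*} [Group K] (f : ∀ α, G α →* K)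
    (hf : ∀ α α' (g : G α) (g' : G α'), I α α' → Commute (f α g) (f α' g')) (α : L) (g : G α) :
    lift f hf (gpOf I G α g) = f α g :=
  Monoid.CoprodI.lift_of f g

theorem commute_of_forall_commute_gpOf {K : Type*} [Group K] (f : GP I G →* K) {k : K}
    (h : ∀ α (g : G α), Commute (f (gpOf I G α g)) k) (x : GP I G) : Commute (f x) k := by
  have hconj : (MulAut.conj k).toMonoidHom.comp f = f :=
    hom_ext fun α g => by simp [← (h α g).eq]
  have hx : k * f x * k⁻¹ = f x := (DFunLike.congr_fun hconj x : _)
  exact (mul_inv_eq_iff_eq_mul.1 hx).symm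

variable (I G)

def subtype (Q : L → Prop) : GP (restI I Q) (restG G Q) →* GP I G :=
  lift (fun γ => gpOf I G γ.1) fun _ _ g g' h => commute_gpOf (I := I) (G := G) h g g'

@[simp]
theorem subtype_gpOf (Q : L → Prop) (γ : {α // Q α}) (g : G γ.1) :
    subtype I G Q (gpOf _ _ γ g) = gpOf I G γ.1 g :=
  lift_of (I := restI I Q) (G := restG G Q) _ _ γ g

def inclusion {Q R : L → Prop} (hQR : ∀ α, Q α → R α) :
    GP (restI I Q) (restG G Q) →* GP (restI I R) (restG G R) :=
  lift (fun γ => gpOf (restI I R) (restG G R) ⟨γ.1, hQR _ γ.2⟩) fun γ δ g g' h =>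
    commute_gpOf (I := restI I R) (G := restG G R) (α := ⟨γ.1, hQR _ γ.2⟩)
      (α' := ⟨δ.1, hQR _ δ.2⟩) h g g'

@[simp]
theorem inclusion_gpOf {Q R : L → Prop} (hQR : ∀ α, Q α → R α) (γ : {α // Q α}) (g : G γ.1) :
    inclusion I G hQR (gpOf _ _ γ g) = gpOf (restI I R) (restG G R) ⟨γ.1, hQR _ γ.2⟩ g :=
  lift_of (I := restI I Q) (G := restG G Q)
    (fun γ => gpOf (restI I R) (restG G R) ⟨γ.1, hQR _ γ.2⟩) _ γ g

end GP

theorem MonoidHom.prod_ext {M N K : Type*} [MulOneClass M] [MulOneClass N] [Monoid K]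
    {f f' : M × N →* K} (hl : f.comp (inl M N) = f'.comp (inl M N))
    (hr : f.comp (inr M N) = f'.comp (inr M N)) : f = f' := by
  ext p
  rw [← Prod.fst_mul_snd p, map_mul, map_mul]
  exact congr_arg₂ (· * ·) (DFunLike.congr_fun hl p.1) (DFunLike.congr_fun hr p.2)

section Amalgam

variable {A K : Type*} {P Q : Type} [Group A] [Group P] [Group Q] [Group K]

def amalLegs (ι₁ : A →* P) (ι₂ : A →* Q) : ∀ i, A →* amalFam P Q i
  | true => ι₁
  | false => ι₂

def amalHoms (f₁ : P →* K) (f₂ : Q →* K) : ∀ i, amalFam P Q i →* K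
  | true => f₁
  | false => f₂

variable {ι₁ : A →* P} {ι₂ : A →* Q}

-- `PushoutI.of` with the codomain types unfolded: the `Group` instances on `amalFam P Q i`
-- agree with those of `P` and `Q` only up to unfolding, which `simp` and `rw` do not see through.
def amalInl : P →* Monoid.PushoutI (amalLegs ι₁ ι₂) :=
  Monoid.PushoutI.of (φ := amalLegs ι₁ ι₂) true

def amalInr : Q →* Monoid.PushoutI (amalLegs ι₁ ι₂) :=
  Monoid.PushoutI.of (φ := amalLegs ι₁ ι₂) false

theorem amalInl_apply_eq_amalInr_apply (a : A) :
    amalInl (ι₂ := ι₂) (ι₁ a) = amalInr (ι₁ := ι₁) (ι₂ a) :=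
  (Monoid.PushoutI.of_apply_eq_base (amalLegs ι₁ ι₂) true a).trans
    (Monoid.PushoutI.of_apply_eq_base (amalLegs ι₁ ι₂) false a).symm

def amalLift (f₁ : P →* K) (f₂ : Q →* K) (h : f₁.comp ι₁ = f₂.comp ι₂) :
    Monoid.PushoutI (amalLegs ι₁ ι₂) →* K :=
  Monoid.PushoutI.lift (amalHoms f₁ f₂) (f₂.comp ι₂) fun i => by cases i <;> [rfl; exact h]

@[simp]
theorem amalLift_amalInl (f₁ : P →* K) (f₂ : Q →* K) (h : f₁.comp ι₁ = f₂.comp ι₂) (p : P) :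
    amalLift f₁ f₂ h (amalInl p) = f₁ p :=
  Monoid.PushoutI.lift_of (φ := amalLegs ι₁ ι₂) _ _ _ (i := true) p

@[simp]
theorem amalLift_amalInr (f₁ : P →* K) (f₂ : Q →* K) (h : f₁.comp ι₁ = f₂.comp ι₂) (q : Q) :
    amalLift f₁ f₂ h (amalInr q) = f₂ q :=
  Monoid.PushoutI.lift_of (φ := amalLegs ι₁ ι₂) _ _ _ (i := false) q

theorem amal_hom_ext {f f' : Monoid.PushoutI (amalLegs ι₁ ι₂) →* K}
    (h₁ : f.comp amalInl = f'.comp amalInl) (h₂ : f.comp amalInr = f'.comp amalInr) : f = f' :=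
  Monoid.PushoutI.hom_ext_nonempty fun i => by cases i <;> [exact h₂; exact h₁]

end Amalgam

section Splitting

variable (β : L)

abbrev deleteGP : Type := GP (restI I (fun α => α ≠ β)) (restG G (fun α => α ≠ β))

abbrev linkGP : Type :=
  GP (restI I (fun α => α ≠ β ∧ I α β)) (restG G (fun α => α ≠ β ∧ I α β))

abbrev linkLegs : ∀ i, linkGP I G β →* amalFam (deleteGP I G β) (linkGP I G β × G β) i :=
  amalLegs (GP.inclusion I G fun _ h => h.1) (MonoidHom.inl _ _)

abbrev AmalGP : Type := Monoid.PushoutI (linkLegs I G β)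

theorem commute_linkGP_node (a : linkGP I G β) (b : G β) :
    Commute (GP.subtype I G (fun α => α ≠ β ∧ I α β) a) (gpOf I G β b) :=
  GP.commute_of_forall_commute_gpOf _ (fun γ g => by simpa using GP.commute_gpOf γ.2.2 g b) a

def amalToGP : AmalGP I G β →* GP I G :=
  amalLift (GP.subtype I G _)
    ((GP.subtype I G _).noncommCoprod (gpOf I G β) (commute_linkGP_node I G β)) <| by
      rw [MonoidHom.noncommCoprod_comp_inl]
      exact GP.hom_ext fun γ g => by simp

@[simp]
theorem amalToGP_amalInl (p : deleteGP I G β) :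
    amalToGP I G β (amalInl p) = GP.subtype I G _ p :=
  amalLift_amalInl _ _ _ p

@[simp]
theorem amalToGP_amalInr (q : linkGP I G β × G β) :
    amalToGP I G β (amalInr q) =
      GP.subtype I G (fun α => α ≠ β ∧ I α β) q.1 * gpOf I G β q.2 :=
  amalLift_amalInr _ _ _ q

theorem amalToGP_amalInr_mk_one (a : linkGP I G β) :
    amalToGP I G β (amalInr (a, 1)) = GP.subtype I G (fun α => α ≠ β ∧ I α β) a := by
  simp

theorem amalToGP_amalInr_one_mk (b : G β) : amalToGP I G β (amalInr (1, b)) = gpOf I G β b := by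
  simp

variable [DecidableEq L]

def nodeToAmal (α : L) : G α →* AmalGP I G β :=
  if h : α = β then h ▸ amalInr.comp (MonoidHom.inr _ _)
  else amalInl.comp (gpOf (restI I (fun α => α ≠ β)) (restG G (fun α => α ≠ β)) ⟨α, h⟩)

theorem nodeToAmal_self (b : G β) :
    nodeToAmal I G β β b = amalInr (1, b) := by
  rw [nodeToAmal, dif_pos rfl]
  rfl

theorem nodeToAmal_of_ne {α : L} (h : α ≠ β) (g : G α) :
    nodeToAmal I G β α g =
      amalInl (gpOf (restI I (fun α => α ≠ β)) (restG G (fun α => α ≠ β)) ⟨α, h⟩ g) := by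
  rw [nodeToAmal, dif_neg h]
  rfl

theorem nodeToAmal_of_link {γ : L} (hne : γ ≠ β) (hI : I γ β) (g : G γ) :
    nodeToAmal I G β γ g = amalInr
      (gpOf (restI I (fun α => α ≠ β ∧ I α β)) (restG G (fun α => α ≠ β ∧ I α β))
        ⟨γ, hne, hI⟩ g, 1) := by
  rw [nodeToAmal_of_ne I G β hne, ← GP.inclusion_gpOf I G (Q := fun α => α ≠ β ∧ I α β)
    (fun _ h => h.1) ⟨γ, hne, hI⟩]
  exact amalInl_apply_eq_amalInr_apply _

theorem commute_nodeToAmal (hirr : ∀ α, ¬ I α α) (hsym : ∀ α β, I α β → I β α) {α α' : L}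
    (h : I α α') (g : G α) (g' : G α') :
    Commute (nodeToAmal I G β α g) (nodeToAmal I G β α' g') := by
  by_cases hα : α = β <;> by_cases hα' : α' = β
  · subst hα hα'
    exact absurd h (hirr _)
  · subst hα
    rw [nodeToAmal_of_link I G _ hα' (hsym _ _ h), nodeToAmal_self]
    exact ((MonoidHom.commute_inl_inr _ _).map _).symm
  · subst hα'
    rw [nodeToAmal_of_link I G _ hα h, nodeToAmal_self]
    exact (MonoidHom.commute_inl_inr _ _).map _
  · rw [nodeToAmal_of_ne I G β hα, nodeToAmal_of_ne I G β hα']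
    exact (GP.commute_gpOf (I := restI I (fun α => α ≠ β)) (G := restG G (fun α => α ≠ β))
      (α := ⟨α, hα⟩) (α' := ⟨α', hα'⟩) h g g').map _

variable (hirr : ∀ α, ¬ I α α) (hsym : ∀ α β, I α β → I β α)

def gpToAmal : GP I G →* AmalGP I G β :=
  GP.lift (nodeToAmal I G β) fun _ _ _ _ h => commute_nodeToAmal I G β hirr hsym h _ _

@[simp]
theorem gpToAmal_gpOf {α : L} (g : G α) :
    gpToAmal I G β hirr hsym (gpOf I G α g) = nodeToAmal I G β α g :=
  GP.lift_of _ _ α g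

theorem amalToGP_comp_gpToAmal :
    (amalToGP I G β).comp (gpToAmal I G β hirr hsym) = MonoidHom.id _ :=
  GP.hom_ext fun α g => by
    by_cases h : α = β
    · subst h
      simp [nodeToAmal_self]
    · simp [nodeToAmal_of_ne I G β h]

theorem gpToAmal_comp_amalToGP :
    (gpToAmal I G β hirr hsym).comp (amalToGP I G β) = MonoidHom.id _ := by
  refine amal_hom_ext (GP.hom_ext fun γ g => ?_) (MonoidHom.prod_ext (GP.hom_ext fun γ g => ?_) ?_)
  · simp [nodeToAmal_of_ne I G β γ.2]
  · simp [nodeToAmal_of_link I G β γ.2.1 γ.2.2]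
  · ext b
    simp [nodeToAmal_self]

def amalEquivGP : AmalGP I G β ≃* GP I G :=
  (amalToGP I G β).toMulEquiv (gpToAmal I G β hirr hsym) (gpToAmal_comp_amalToGP I G β hirr hsym)
    (amalToGP_comp_gpToAmal I G β hirr hsym)

end Splitting

theorem graph_product_iso_amalgamated_product_general
    {L : Type} (I : L → L → Prop) (G : L → Type) [∀ α, Group (G α)]
    (hirr : ∀ α, ¬ I α α) (hsym : ∀ α β, I α β → I β α)
    (β : L)
    -- the canonical homomorphism `A → P` induced by the inclusion of the link into `L ∖ {β}`
    (j : GP (restI I (fun α => α ≠ β ∧ I α β)) (restG G (fun α => α ≠ β ∧ I α β)) →*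
         GP (restI I (fun α => α ≠ β)) (restG G (fun α => α ≠ β)))
    (hj : ∀ (γ : {α : L // α ≠ β ∧ I α β}) (g : G γ.1),
      j (gpOf (restI I (fun α => α ≠ β ∧ I α β)) (restG G (fun α => α ≠ β ∧ I α β)) γ g) =
        gpOf (restI I (fun α => α ≠ β)) (restG G (fun α => α ≠ β)) ⟨γ.1, γ.2.1⟩ g)
    -- the two legs of the pushout diagram: `A → P` and `a ↦ (a, 1) : A → A × B`
    (φ : (i : Bool) →
      (GP (restI I (fun α => α ≠ β ∧ I α β)) (restG G (fun α => α ≠ β ∧ I α β)) →*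
        amalFam (GP (restI I (fun α => α ≠ β)) (restG G (fun α => α ≠ β)))
          ((GP (restI I (fun α => α ≠ β ∧ I α β)) (restG G (fun α => α ≠ β ∧ I α β))) × G β) i))
    (hφt : φ true = j)
    (hφf : φ false = (MonoidHom.id _).prod 1) :
    ∃ Φ : Monoid.PushoutI φ ≃* GP I G,
      (∀ (α : {α : L // α ≠ β}) (g : G α.1),
        Φ (Monoid.PushoutI.of (φ := φ) true
            (gpOf (restI I (fun α => α ≠ β)) (restG G (fun α => α ≠ β)) α g)) =
          gpOf I G α.1 g) ∧
      (∀ (γ : {α : L // α ≠ β ∧ I α β}) (g : G γ.1),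
        Φ (Monoid.PushoutI.of (φ := φ) false
            (gpOf (restI I (fun α => α ≠ β ∧ I α β)) (restG G (fun α => α ≠ β ∧ I α β)) γ g, 1)) =
          gpOf I G γ.1 g) ∧
      (∀ b : G β,
        Φ (Monoid.PushoutI.of (φ := φ) false (1, b)) = gpOf I G β b) := by
  classical
  obtain rfl : j = GP.inclusion I G fun _ h => h.1 := GP.hom_ext fun γ g => by simp [hj]
  obtain rfl : φ = linkLegs I G β := by
    funext i
    cases i
    exacts [hφf, hφt]
  refine ⟨amalEquivGP I G β hirr hsym, fun α g => ?_, fun γ g => ?_, fun b => ?_⟩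
  · exact (amalToGP_amalInl I G β _).trans (GP.subtype_gpOf I G _ α g)
  · exact (amalToGP_amalInr_mk_one I G β _).trans (GP.subtype_gpOf I G _ γ g)
  · exact amalToGP_amalInr_one_mk I G β b

/-- for a node `β`, with `P` the graph product over `L ∖ {β}`,
`A` the graph product over the link of `β`, and `B = G β`, the canonical
homomorphisms from `P` and from `A × B` into the graph product `G` induce an
isomorphism of the amalgamated free product `P ⋆_A (A × B)` (the pushout of
the canonical homomorphism `A → P` and of `a ↦ (a,1) : A → A × B`) onto `G`. -/
theorem graph_product_iso_amalgamated_product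
    {L : Type} [Finite L] (I : L → L → Prop) (G : L → Type) [∀ α, Group (G α)]
    (hirr : ∀ α, ¬ I α α) (hsym : ∀ α β, I α β → I β α)
    (β : L)
    -- the canonical homomorphism `A → P` induced by the inclusion of the link into `L ∖ {β}`
    (j : GP (restI I (fun α => α ≠ β ∧ I α β)) (restG G (fun α => α ≠ β ∧ I α β)) →*
         GP (restI I (fun α => α ≠ β)) (restG G (fun α => α ≠ β)))
    (hj : ∀ (γ : {α : L // α ≠ β ∧ I α β}) (g : G γ.1),
      j (gpOf (restI I (fun α => α ≠ β ∧ I α β)) (restG G (fun α => α ≠ β ∧ I α β)) γ g) =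
        gpOf (restI I (fun α => α ≠ β)) (restG G (fun α => α ≠ β)) ⟨γ.1, γ.2.1⟩ g)
    -- the two legs of the pushout diagram: `A → P` and `a ↦ (a, 1) : A → A × B`
    (φ : (i : Bool) →
      (GP (restI I (fun α => α ≠ β ∧ I α β)) (restG G (fun α => α ≠ β ∧ I α β)) →*
        amalFam (GP (restI I (fun α => α ≠ β)) (restG G (fun α => α ≠ β)))
          ((GP (restI I (fun α => α ≠ β ∧ I α β)) (restG G (fun α => α ≠ β ∧ I α β))) × G β) i))
    (hφt : φ true = j)
    (hφf : φ false = (MonoidHom.id _).prod 1) :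
    ∃ Φ : Monoid.PushoutI φ ≃* GP I G,
      (∀ (α : {α : L // α ≠ β}) (g : G α.1),
        Φ (Monoid.PushoutI.of (φ := φ) true
            (gpOf (restI I (fun α => α ≠ β)) (restG G (fun α => α ≠ β)) α g)) =
          gpOf I G α.1 g) ∧
      (∀ (γ : {α : L // α ≠ β ∧ I α β}) (g : G γ.1),
        Φ (Monoid.PushoutI.of (φ := φ) false
            (gpOf (restI I (fun α => α ≠ β ∧ I α β)) (restG G (fun α => α ≠ β ∧ I α β)) γ g, 1)) =
          gpOf I G γ.1 g) ∧
      (∀ b : G β,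
        Φ (Monoid.PushoutI.of (φ := φ) false (1, b)) = gpOf I G β b) :=
  graph_product_iso_amalgamated_product_general I G hirr hsym β j hj φ hφt hφf
end

section
/- Let B be a group, N a set with a distinguished element 0 ∈ N, and F = ⋆_{ν∈N} B^{(ν)} the free product of copies of B with canonical injections ι_ν : B → F. Let φ : F → B be the homomorphism with φ ∘ ι_ν = id_B for all ν ∈ N, and K = ker(φ). Let X = (N ∖ {0}) × (B ∖ {1}) and let ξ be the homomorphism from the free group F(X) on X to F determined by ξ(ν, g) = ι_ν(g) · ι_0(g)⁻¹. Then ξ is injective and its image is contained in K; that is, the elements ι_ν(g) ι_0(g)⁻¹ for ν ≠ 0 and g ≠ 1 form a basis of a free subgroup of K. -/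
/-!
Let `B` act on the free group `F(N × B)` by left multiplication on the second coordinate, and
write `x_{ν,b}` for its generators. Conjugating the inclusion `B → F(N × B) ⋊ B` by `x_{ν,1}` gives
homomorphisms `b ↦ (x_{ν,1}⁻¹ x_{ν,b}, b)`, which assemble into `ψ : ⋆_ν B → F(N × B) ⋊ B`.
Then `ψ (ι_ν(g) ι_{n0}(g)⁻¹)` lies in the normal factor, where it is the word
`x_{ν,1}⁻¹ x_{ν,g} (x_{n0,1}⁻¹ x_{n0,g})⁻¹`; killing the generators `x_{n0,b}` and `x_{ν,1}` sends
it back to the generator `(ν, g)`. So `ψ ∘ ξ` has a left inverse and `ξ` is injective.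
-/

open Monoid SemidirectProduct

namespace FreeGroup

variable {B : Type*} [Group B] {N : Type*}

variable (N) in
noncomputable def mulLeftAut : B →* MulAut (FreeGroup (N × B)) where
  toFun b := freeGroupCongr ((Equiv.refl N).prodCongr (Equiv.mulLeft b))
  map_one' := MulEquiv.toMonoidHom_injective <| ext_hom _ _ fun _ => by simp
  map_mul' a b := MulEquiv.toMonoidHom_injective <| ext_hom _ _ fun _ => by
    simp [Prod.map, mul_assoc]

@[simp]
theorem mulLeftAut_of (b : B) (ν : N) (c : B) :
    mulLeftAut N b (of (ν, c)) = of (ν, b * c) := by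
  simp [mulLeftAut]

def mulLeftCocycle (ν : N) (b : B) : FreeGroup (N × B) :=
  (of (ν, 1))⁻¹ * of (ν, b)

open Classical in
noncomputable def collapseBase (n0 : N) :
    FreeGroup (N × B) →* FreeGroup ({ν : N // ν ≠ n0} × {b : B // b ≠ 1}) :=
  lift fun p => if h : p.1 ≠ n0 ∧ p.2 ≠ 1 then of (⟨p.1, h.1⟩, ⟨p.2, h.2⟩) else 1

theorem collapseBase_mulLeftCocycle_of_ne {n0 ν : N} (hν : ν ≠ n0) {b : B} (hb : b ≠ 1) :
    collapseBase n0 (mulLeftCocycle ν b) = of (⟨ν, hν⟩, ⟨b, hb⟩) := by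
  simp [collapseBase, mulLeftCocycle, hν, hb]

theorem collapseBase_mulLeftCocycle_self (n0 : N) (b : B) :
    collapseBase n0 (mulLeftCocycle n0 b) = 1 := by
  simp [collapseBase, mulLeftCocycle]

noncomputable def mulLeftCocycleDiv (n0 : N) :
    FreeGroup ({ν : N // ν ≠ n0} × {b : B // b ≠ 1}) →* FreeGroup (N × B) :=
  lift fun x => mulLeftCocycle x.1.1 x.2.1 * (mulLeftCocycle n0 x.2.1)⁻¹

theorem leftInverse_collapseBase_mulLeftCocycleDiv (n0 : N) :
    Function.LeftInverse (collapseBase (B := B) n0) (mulLeftCocycleDiv n0) := by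
  have h : (collapseBase n0).comp (mulLeftCocycleDiv (B := B) n0) = MonoidHom.id _ :=
    ext_hom _ _ fun ⟨ν, b⟩ => by
      simp [mulLeftCocycleDiv, collapseBase_mulLeftCocycle_of_ne ν.2 b.2,
        collapseBase_mulLeftCocycle_self]
  exact DFunLike.congr_fun h

end FreeGroup

namespace Monoid.CoprodI

open FreeGroup (mulLeftAut mulLeftCocycle)

variable (B : Type*) [Group B] (N : Type*)

noncomputable def toSemidirectMulLeftAut :
    CoprodI (fun _ : N => B) →* FreeGroup (N × B) ⋊[mulLeftAut N] B :=
  lift fun ν => (MulAut.conj (inl (FreeGroup.of (ν, 1)))⁻¹).toMonoidHom.comp inr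

variable {B N}

theorem toSemidirectMulLeftAut_of (ν : N) (b : B) :
    toSemidirectMulLeftAut B N (of (i := ν) b) = inl (mulLeftCocycle ν b) * inr b := by
  have := inl_aut (φ := mulLeftAut N) b (FreeGroup.of (ν, 1))
  simp only [FreeGroup.mulLeftAut_of, mul_one] at this
  simp [toSemidirectMulLeftAut, mulLeftCocycle, this, mul_assoc]

theorem toSemidirectMulLeftAut_of_mul_of_inv (ν μ : N) (g : B) :
    toSemidirectMulLeftAut B N (of (i := ν) g * (of (i := μ) g)⁻¹) =
      inl (mulLeftCocycle ν g * (mulLeftCocycle μ g)⁻¹) := by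
  simp only [map_mul, map_inv, toSemidirectMulLeftAut_of]
  group

end Monoid.CoprodI

/-- Let `B` be a group, `N` a set with a distinguished element `n0`,
`F = ⋆_{ν∈N} B` the free product of copies of `B`, `φ : F →* B` the homomorphism
restricting to the identity on each copy, and `K = ker φ`.  The homomorphism `ξ`
from the free group on `X = (N ∖ {n0}) × (B ∖ {1})` to `F` sending `(ν, g)` to
`ι_ν(g) · ι_{n0}(g)⁻¹` is injective with image contained in `K`; i.e. these
elements form a basis of a free subgroup of `K`. -/
theorem free_basis_in_kernel_of_free_product_of_copies
    (B : Type) [Group B] (N : Type) (n0 : N)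
    (φ : Monoid.CoprodI (fun _ : N => B) →* B)
    (hφ : ∀ (ν : N) (b : B), φ (Monoid.CoprodI.of (i := ν) b) = b)
    (ξ : FreeGroup ({ν : N // ν ≠ n0} × {b : B // b ≠ 1}) →*
         Monoid.CoprodI (fun _ : N => B))
    (hξ : ∀ x : {ν : N // ν ≠ n0} × {b : B // b ≠ 1},
      ξ (FreeGroup.of x) =
        Monoid.CoprodI.of (i := x.1.1) x.2.1 *
        (Monoid.CoprodI.of (i := n0) x.2.1)⁻¹) :
    Function.Injective ξ ∧ ∀ y, ξ y ∈ φ.ker := by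
  have hψξ : (CoprodI.toSemidirectMulLeftAut B N).comp ξ =
      (inl (φ := FreeGroup.mulLeftAut N)).comp (FreeGroup.mulLeftCocycleDiv n0) :=
    FreeGroup.ext_hom _ _ fun x => by
      simp [hξ, CoprodI.toSemidirectMulLeftAut_of_mul_of_inv, FreeGroup.mulLeftCocycleDiv]
  have hφξ : φ.comp ξ = 1 := FreeGroup.ext_hom _ _ fun _ => by simp [hξ, hφ]
  have hinj : Function.Injective ((CoprodI.toSemidirectMulLeftAut B N).comp ξ) := by
    rw [hψξ]
    exact inl_injective.comp (FreeGroup.leftInverse_collapseBase_mulLeftCocycleDiv n0).injective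
  exact ⟨Function.Injective.of_comp (f := CoprodI.toSemidirectMulLeftAut B N) hinj,
    DFunLike.congr_fun hφξ⟩
end

section
/- Every word w ∈ Γ* represents the same element of G as some reduced word; and two reduced words u, v ∈ Γ* represent the same element of G if and only if u ≡ v. -/
variable {L : Type} (I : L → L → Prop) (G : L → Type) [∀ α, Group (G α)]

/-! The graph product acts on the trace classes of reduced words. A reduced word `w` can be
written `w ≡ b r` with `b ∈ G_α` (possibly `1`) and `r` reduced with no letter of `Γ_α` that
commutes to the front; since `I` is irreflexive, `b` is unique and `r` is unique up to `≡`.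
Then `g ∈ G_α` acts by `b r ↦ (g b) r`. These are actions of the `G_α` that commute for
independent nodes, so they assemble to an action of `G`. Acting on the empty word recovers the
class of a reduced word from the element it represents, and applying the actions letter by
letter to the empty word produces a reduced word representing any given word. -/

variable {I G}

theorem TraceEquiv.refl (w : List (Letter L G)) : TraceEquiv I G w w :=
  Relation.EqvGen.refl w

theorem TraceEquiv.symm {u v : List (Letter L G)} (h : TraceEquiv I G u v) :
    TraceEquiv I G v u :=
  Relation.EqvGen.symm u v h

theorem TraceEquiv.trans {u v w : List (Letter L G)} (h₁ : TraceEquiv I G u v)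
    (h₂ : TraceEquiv I G v w) : TraceEquiv I G u w :=
  Relation.EqvGen.trans u v w h₁ h₂

instance : Trans (TraceEquiv I G) (TraceEquiv I G) (TraceEquiv I G) := ⟨TraceEquiv.trans⟩

theorem TraceEquiv.swap {a b : Letter L G} (hab : I a.1 b.1) (w : List (Letter L G)) :
    TraceEquiv I G (a :: b :: w) (b :: a :: w) :=
  .rel _ _ (.swap [] w a b hab)

theorem TraceEquiv.cons (c : Letter L G) {u v : List (Letter L G)} (h : TraceEquiv I G u v) :
    TraceEquiv I G (c :: u) (c :: v) := by
  induction h with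
  | rel _ _ h =>
    obtain ⟨p, q, a, b, hab⟩ := h
    exact .rel _ _ (.swap (c :: p) q a b hab)
  | refl => exact .refl _
  | symm _ _ _ ih => exact ih.symm
  | trans _ _ _ _ _ ih₁ ih₂ => exact ih₁.trans ih₂

theorem TraceStep.symm [Std.Symm I] {u v : List (Letter L G)} (h : TraceStep I G u v) :
    TraceStep I G v u := by
  obtain ⟨p, q, a, b, hab⟩ := h
  exact .swap p q b a (symm_of I hab)

instance [Std.Symm I] : Std.Symm (TraceStep I G) := ⟨fun _ _ => TraceStep.symm⟩

variable (I G) in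
/-- `Leads I G a w r`: `w = x a y` with every letter of `x` independent of `a`, and `r = x y`. -/
inductive Leads (a : Letter L G) : List (Letter L G) → List (Letter L G) → Prop
  | head (w : List (Letter L G)) : Leads a (a :: w) w
  | cons {c : Letter L G} {w r : List (Letter L G)} :
      I c.1 a.1 → Leads a w r → Leads a (c :: w) (c :: r)

theorem Leads.traceEquiv {a : Letter L G} {w r : List (Letter L G)} (h : Leads I G a w r) :
    TraceEquiv I G w (a :: r) := by
  induction h with
  | head => exact .refl _
  | cons hc _ ih => exact (ih.cons _).trans (.swap hc _)

theorem Leads.of_traceStep [Std.Symm I] {a : Letter L G} {w w' r : List (Letter L G)}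
    (hs : TraceStep I G w w') (h : Leads I G a w r) :
    ∃ r', Leads I G a w' r' ∧ TraceEquiv I G r r' := by
  obtain ⟨p, q, c, d, hcd⟩ := hs
  induction p generalizing r with
  | nil =>
    rcases h with _ | ⟨hc, _ | ⟨hd, h⟩⟩
    · exact ⟨d :: q, .cons (symm_of I hcd) (.head q), .refl _⟩
    · exact ⟨c :: q, .head _, .refl _⟩
    · exact ⟨_, .cons hd (.cons hc h), .swap hcd _⟩
  | cons e p ih =>
    rcases h with _ | ⟨he, h⟩
    · exact ⟨_, .head _, .rel _ _ (.swap p q c d hcd)⟩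
    · obtain ⟨r', h', hr⟩ := ih h
      exact ⟨_, .cons he h', hr.cons e⟩

theorem Leads.of_traceEquiv [Std.Symm I] {a : Letter L G} {w w' r : List (Letter L G)}
    (he : TraceEquiv I G w w') (h : Leads I G a w r) :
    ∃ r', Leads I G a w' r' ∧ TraceEquiv I G r r' := by
  rw [TraceEquiv, Relation.EqvGen.eqvGen_eq_reflTransGen] at he
  induction he with
  | refl => exact ⟨r, h, .refl _⟩
  | tail _ hs ih =>
    obtain ⟨r', h', hr⟩ := ih
    obtain ⟨r'', h'', hr'⟩ := h'.of_traceStep hs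
    exact ⟨r'', h'', hr.trans hr'⟩

theorem TraceEquiv.cons_cancel [Std.Symm I] [Std.Irrefl I] {a a' : Letter L G}
    {u v : List (Letter L G)} (h : TraceEquiv I G (a :: u) (a' :: v)) (hα : a.1 = a'.1) :
    a = a' ∧ TraceEquiv I G u v := by
  obtain ⟨r, hr, hur⟩ := (Leads.head (I := I) (a := a) u).of_traceEquiv h
  rcases hr with _ | ⟨hI, -⟩
  · exact ⟨rfl, hur⟩
  · rw [hα] at hI
    exact absurd hI (irrefl _)

variable (I G) in
def HasLead (β : L) (w : List (Letter L G)) : Prop :=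
  ∃ (b : {g : G β // g ≠ 1}) (r : List (Letter L G)), Leads I G ⟨β, b⟩ w r

theorem TraceEquiv.hasLead [Std.Symm I] {β : L} {w w' : List (Letter L G)}
    (he : TraceEquiv I G w w') (h : HasLead I G β w) : HasLead I G β w' := by
  obtain ⟨b, r, h⟩ := h
  obtain ⟨r', h', -⟩ := h.of_traceEquiv he
  exact ⟨b, r', h'⟩

theorem hasLead_cons_iff [Std.Irrefl I] {c : Letter L G} {β : L} {w : List (Letter L G)}
    (hc : I c.1 β) : HasLead I G β (c :: w) ↔ HasLead I G β w := by
  constructor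
  · rintro ⟨b, r, _ | ⟨-, h⟩⟩
    · exact absurd hc (irrefl _)
    · exact ⟨b, _, h⟩
  · rintro ⟨b, r, h⟩
    exact ⟨b, c :: r, .cons hc h⟩

theorem hasLead_iff {β : L} {w : List (Letter L G)} :
    HasLead I G β w ↔ ∃ (b : {g : G β // g ≠ 1}) (u y : List (Letter L G)),
      w = u ++ ⟨β, b⟩ :: y ∧ IndepWord I G β u := by
  constructor
  · rintro ⟨b, r, h⟩
    induction h with
    | head y => exact ⟨b, [], y, rfl, List.forall_mem_nil _⟩
    | cons hc _ ih =>
      obtain ⟨b', u, y, rfl, hu⟩ := ih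
      exact ⟨b', _ :: u, y, rfl, List.forall_mem_cons.2 ⟨hc, hu⟩⟩
  · rintro ⟨b, u, y, rfl, hu⟩
    refine ⟨b, u ++ y, ?_⟩
    induction u with
    | nil => exact .head y
    | cons c u ih => exact .cons (hu c (.head _)) (ih fun d hd => hu d (.tail _ hd))

theorem reduced_nil : Reduced I G [] := by
  rintro ⟨β, b, b', x, u, y, h, -⟩
  simp at h

theorem reduced_cons_iff {a : Letter L G} {w : List (Letter L G)} :
    Reduced I G (a :: w) ↔ Reduced I G w ∧ ¬ HasLead I G a.1 w := by
  rw [hasLead_iff, Reduced, Reduced, ← not_or, not_iff_not]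
  constructor
  · rintro ⟨β, b, b', _ | ⟨c, x⟩, u, y, h, hu⟩ <;>
      obtain ⟨rfl, rfl⟩ := List.cons.inj h
    · exact .inr ⟨b', u, y, rfl, hu⟩
    · exact .inl ⟨β, b, b', x, u, y, rfl, hu⟩
  · rintro (⟨β, b, b', x, u, y, rfl, hu⟩ | ⟨b', u, y, rfl, hu⟩)
    · exact ⟨β, b, b', a :: x, u, y, rfl, hu⟩
    · exact ⟨a.1, a.2, b', [], u, y, rfl, hu⟩

theorem Reduced.of_traceStep [Std.Symm I] [Std.Irrefl I] {w w' : List (Letter L G)}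
    (hs : TraceStep I G w w') (h : Reduced I G w) : Reduced I G w' := by
  obtain ⟨p, q, c, d, hcd⟩ := hs
  induction p with
  | nil =>
    simp only [List.nil_append, reduced_cons_iff] at h ⊢
    obtain ⟨⟨hq, hdq⟩, hcdq⟩ := h
    exact ⟨⟨hq, fun hc => hcdq ((hasLead_cons_iff (symm_of I hcd)).2 hc)⟩,
      fun hd => hdq ((hasLead_cons_iff hcd).1 hd)⟩
  | cons e p ih =>
    rw [List.cons_append, reduced_cons_iff] at h ⊢
    have hswap : TraceEquiv I G (p ++ d :: c :: q) (p ++ c :: d :: q) :=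
      .rel _ _ (.swap p q d c (symm_of I hcd))
    exact ⟨ih h.1, fun he => h.2 (hswap.hasLead he)⟩

theorem Reduced.of_traceEquiv [Std.Symm I] [Std.Irrefl I] {w w' : List (Letter L G)}
    (h : Reduced I G w) (he : TraceEquiv I G w w') : Reduced I G w' := by
  rw [TraceEquiv, Relation.EqvGen.eqvGen_eq_reflTransGen] at he
  induction he with
  | refl => exact h
  | tail _ hs ih => exact ih.of_traceStep hs

open Classical in
variable (G) in
noncomputable def consElem (α : L) (x : G α) (w : List (Letter L G)) : List (Letter L G) :=
  if hx : x = 1 then w else ⟨α, x, hx⟩ :: w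

theorem consElem_one (α : L) (w : List (Letter L G)) : consElem G α 1 w = w :=
  dif_pos rfl

theorem consElem_of_ne_one {α : L} {x : G α} (hx : x ≠ 1) (w : List (Letter L G)) :
    consElem G α x w = ⟨α, x, hx⟩ :: w :=
  dif_neg hx

theorem TraceEquiv.consElem_congr {α : L} (x : G α) {u v : List (Letter L G)}
    (h : TraceEquiv I G u v) : TraceEquiv I G (consElem G α x u) (consElem G α x v) := by
  unfold consElem
  split_ifs
  exacts [h, h.cons _]

theorem consElem_comm {α β : L} (hI : I α β) (x : G α) (y : G β) (w : List (Letter L G)) :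
    TraceEquiv I G (consElem G α x (consElem G β y w)) (consElem G β y (consElem G α x w)) := by
  unfold consElem
  split_ifs
  exacts [.refl _, .refl _, .refl _, .swap hI w]

theorem hasLead_consElem_self {α : L} {x : G α} (hx : x ≠ 1) (w : List (Letter L G)) :
    HasLead I G α (consElem G α x w) := by
  rw [consElem_of_ne_one hx]
  exact ⟨_, w, .head w⟩

theorem hasLead_consElem_iff [Std.Irrefl I] {α β : L} (hI : I β α) (y : G β)
    {w : List (Letter L G)} : HasLead I G α (consElem G β y w) ↔ HasLead I G α w := by
  unfold consElem
  split_ifs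
  exacts [.rfl, hasLead_cons_iff hI]

theorem reduced_consElem {α : L} (x : G α) {w : List (Letter L G)} (hw : Reduced I G w)
    (hα : ¬ HasLead I G α w) : Reduced I G (consElem G α x w) := by
  unfold consElem
  split_ifs
  exacts [hw, reduced_cons_iff.2 ⟨hw, hα⟩]

theorem TraceEquiv.consElem_cancel [Std.Symm I] [Std.Irrefl I] {α : L} {x y : G α}
    {u v : List (Letter L G)} (hu : ¬ HasLead I G α u) (hv : ¬ HasLead I G α v)
    (h : TraceEquiv I G (consElem G α x u) (consElem G α y v)) :
    x = y ∧ TraceEquiv I G u v := by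
  by_cases hx : x = 1 <;> by_cases hy : y = 1
  · subst hx hy
    rw [consElem_one, consElem_one] at h
    exact ⟨rfl, h⟩
  · rw [hx, consElem_one] at h
    exact absurd (h.symm.hasLead (hasLead_consElem_self hy v)) hu
  · rw [hy, consElem_one] at h
    exact absurd (h.hasLead (hasLead_consElem_self hx u)) hv
  · rw [consElem_of_ne_one hx, consElem_of_ne_one hy] at h
    obtain ⟨hxy, huv⟩ := h.cons_cancel rfl
    exact ⟨by simpa using hxy, huv⟩

theorem evalWord_cons (a : Letter L G) (w : List (Letter L G)) :
    evalWord I G (a :: w) = gpOf I G a.1 a.2 * evalWord I G w :=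
  List.prod_cons

theorem evalWord_append (u v : List (Letter L G)) :
    evalWord I G (u ++ v) = evalWord I G u * evalWord I G v := by
  simp [evalWord]

theorem evalWord_consElem (α : L) (x : G α) (w : List (Letter L G)) :
    evalWord I G (consElem G α x w) = gpOf I G α x * evalWord I G w := by
  unfold consElem
  split_ifs with hx
  · rw [hx, map_one, one_mul]
  · exact evalWord_cons _ w

theorem gpOf_commute {α β : L} (hI : I α β) (x : G α) (y : G β) :
    Commute (gpOf I G α x) (gpOf I G β y) := by
  rw [← commutatorElement_eq_one_iff_commute, commutatorElement_def]
  exact (QuotientGroup.eq_one_iff (Monoid.CoprodI.of x * Monoid.CoprodI.of y *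
    (Monoid.CoprodI.of x)⁻¹ * (Monoid.CoprodI.of y)⁻¹)).2
    (Subgroup.subset_normalClosure ⟨α, β, x, y, hI, rfl⟩)

theorem TraceEquiv.evalWord_eq {u v : List (Letter L G)} (h : TraceEquiv I G u v) :
    evalWord I G u = evalWord I G v := by
  induction h with
  | rel _ _ h =>
    obtain ⟨p, q, a, b, hab⟩ := h
    simp only [evalWord_append, evalWord_cons, (gpOf_commute hab _ _).left_comm]
  | refl => rfl
  | symm _ _ _ ih => exact ih.symm
  | trans _ _ _ _ _ ih₁ ih₂ => exact ih₁.trans ih₂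

variable (I G) in
structure IsSplit (α : L) (w : List (Letter L G)) (b : G α) (r : List (Letter L G)) : Prop where
  traceEquiv : TraceEquiv I G w (consElem G α b r)
  reduced : Reduced I G r
  not_hasLead : ¬ HasLead I G α r

theorem isSplit_consElem {α : L} {r : List (Letter L G)} (hr : Reduced I G r)
    (hα : ¬ HasLead I G α r) (b : G α) : IsSplit I G α (consElem G α b r) b r :=
  ⟨.refl _, hr, hα⟩

theorem isSplit_one {α : L} {r : List (Letter L G)} (hr : Reduced I G r)
    (hα : ¬ HasLead I G α r) : IsSplit I G α r 1 r :=
  ⟨by rw [consElem_one]; exact .refl r, hr, hα⟩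

theorem IsSplit.of_traceEquiv {α : L} {w w' r : List (Letter L G)} {b : G α}
    (h : IsSplit I G α w b r) (he : TraceEquiv I G w' w) : IsSplit I G α w' b r :=
  ⟨he.trans h.traceEquiv, h.reduced, h.not_hasLead⟩

theorem IsSplit.unique [Std.Symm I] [Std.Irrefl I] {α : L} {w r r' : List (Letter L G)}
    {b b' : G α} (h : IsSplit I G α w b r) (h' : IsSplit I G α w b' r') :
    b = b' ∧ TraceEquiv I G r r' :=
  TraceEquiv.consElem_cancel h.not_hasLead h'.not_hasLead (h.traceEquiv.symm.trans h'.traceEquiv)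

theorem Reduced.exists_isSplit [Std.Symm I] [Std.Irrefl I] {w : List (Letter L G)}
    (hw : Reduced I G w) (α : L) : ∃ b r, IsSplit I G α w b r := by
  by_cases hα : HasLead I G α w
  · obtain ⟨b, r, h⟩ := hα
    obtain ⟨hr, hαr⟩ := reduced_cons_iff.1 (hw.of_traceEquiv h.traceEquiv)
    exact ⟨b, r, by rw [consElem_of_ne_one b.2]; exact h.traceEquiv, hr, hαr⟩
  · exact ⟨1, w, isSplit_one hw hα⟩

theorem IsSplit.swap [Std.Symm I] [Std.Irrefl I] {α β : L} (hI : I α β)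
    {w r t : List (Letter L G)} {a : G α} {b : G β}
    (h₁ : IsSplit I G α w a r) (h₂ : IsSplit I G β r b t) :
    IsSplit I G β w b (consElem G α a t) ∧ IsSplit I G α (consElem G α a t) a t := by
  have ht : ¬ HasLead I G α t := fun ht =>
    h₁.not_hasLead (h₂.traceEquiv.symm.hasLead ((hasLead_consElem_iff (symm_of I hI) b).2 ht))
  refine ⟨⟨?_, reduced_consElem a h₂.reduced ht,
    (hasLead_consElem_iff hI a).not.2 h₂.not_hasLead⟩, isSplit_consElem h₂.reduced ht a⟩
  exact h₁.traceEquiv.trans ((h₂.traceEquiv.consElem_congr a).trans (consElem_comm hI a b t))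

variable (I G) in
noncomputable def splitAt (α : L) (w : List (Letter L G)) : G α × List (Letter L G) :=
  Classical.epsilon fun p => IsSplit I G α w p.1 p.2

variable (I G) in
noncomputable def actWord (α : L) (g : G α) (w : List (Letter L G)) : List (Letter L G) :=
  consElem G α (g * (splitAt I G α w).1) (splitAt I G α w).2

theorem Reduced.isSplit_splitAt [Std.Symm I] [Std.Irrefl I] {w : List (Letter L G)}
    (hw : Reduced I G w) (α : L) :
    IsSplit I G α w (splitAt I G α w).1 (splitAt I G α w).2 :=
  Classical.epsilon_spec (p := fun p : G α × _ => IsSplit I G α w p.1 p.2)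
    (let ⟨b, r, h⟩ := hw.exists_isSplit α; ⟨(b, r), h⟩)

theorem actWord_traceEquiv [Std.Symm I] [Std.Irrefl I] {α : L} {w r : List (Letter L G)}
    {b : G α} (hw : Reduced I G w) (h : IsSplit I G α w b r) (g : G α) :
    TraceEquiv I G (actWord I G α g w) (consElem G α (g * b) r) := by
  obtain ⟨rfl, hr⟩ := (hw.isSplit_splitAt α).unique h
  exact hr.consElem_congr _

theorem IsSplit.actWord [Std.Symm I] [Std.Irrefl I] {α : L} {w r : List (Letter L G)}
    {b : G α} (h : IsSplit I G α w b r) (hw : Reduced I G w) (g : G α) :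
    IsSplit I G α (actWord I G α g w) (g * b) r :=
  (isSplit_consElem h.reduced h.not_hasLead _).of_traceEquiv (actWord_traceEquiv hw h g)

theorem Reduced.actWord [Std.Symm I] [Std.Irrefl I] {w : List (Letter L G)}
    (hw : Reduced I G w) (α : L) (g : G α) : Reduced I G (actWord I G α g w) :=
  reduced_consElem _ (hw.isSplit_splitAt α).reduced (hw.isSplit_splitAt α).not_hasLead

theorem actWord_congr [Std.Symm I] [Std.Irrefl I] {α : L} (g : G α) {w w' : List (Letter L G)}
    (hw : Reduced I G w) (he : TraceEquiv I G w w') :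
    TraceEquiv I G (actWord I G α g w) (actWord I G α g w') :=
  (actWord_traceEquiv (hw.of_traceEquiv he) ((hw.isSplit_splitAt α).of_traceEquiv he.symm) g).symm

theorem evalWord_actWord [Std.Symm I] [Std.Irrefl I] {w : List (Letter L G)}
    (hw : Reduced I G w) (α : L) (g : G α) :
    evalWord I G (actWord I G α g w) = gpOf I G α g * evalWord I G w := by
  rw [actWord, evalWord_consElem, (hw.isSplit_splitAt α).traceEquiv.evalWord_eq,
    evalWord_consElem, map_mul, mul_assoc]

theorem actWord_one [Std.Symm I] [Std.Irrefl I] {w : List (Letter L G)} (hw : Reduced I G w)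
    (α : L) : TraceEquiv I G (actWord I G α 1 w) w := by
  rw [actWord, one_mul]
  exact (hw.isSplit_splitAt α).traceEquiv.symm

theorem actWord_mul [Std.Symm I] [Std.Irrefl I] {w : List (Letter L G)} (hw : Reduced I G w)
    {α : L} (g g' : G α) :
    TraceEquiv I G (actWord I G α (g * g') w) (actWord I G α g (actWord I G α g' w)) := by
  obtain ⟨b, r, h⟩ := hw.exists_isSplit α
  calc TraceEquiv I G (actWord I G α (g * g') w) (consElem G α (g * g' * b) r) :=
        actWord_traceEquiv hw h _
    _ = consElem G α (g * (g' * b)) r := by rw [mul_assoc]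
    TraceEquiv I G _ (actWord I G α g (actWord I G α g' w)) :=
        (actWord_traceEquiv (hw.actWord α g') (h.actWord hw g') g).symm

theorem actWord_comm [Std.Symm I] [Std.Irrefl I] {α β : L} (hI : I α β) {w : List (Letter L G)}
    (hw : Reduced I G w) (x : G α) (y : G β) :
    TraceEquiv I G (actWord I G α x (actWord I G β y w))
      (actWord I G β y (actWord I G α x w)) := by
  -- `w ≡ a b t` with `a ∈ G_α`, `b ∈ G_β`, and both composites are `(x a) (y b) t`.
  obtain ⟨a, r, hα⟩ := hw.exists_isSplit α
  obtain ⟨b, t, hβ⟩ := hα.reduced.exists_isSplit β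
  obtain ⟨hβw, hαt⟩ := hα.swap hI hβ
  have hα' : IsSplit I G α (actWord I G β y w) a (consElem G β (y * b) t) :=
    ((hβw.actWord hw y).swap (symm_of I hI) hαt).1
  have hβ' : IsSplit I G β (actWord I G α x w) b (consElem G α (x * a) t) :=
    ((hα.actWord hw x).swap hI hβ).1
  calc TraceEquiv I G (actWord I G α x (actWord I G β y w))
        (consElem G α (x * a) (consElem G β (y * b) t)) :=
        actWord_traceEquiv (hw.actWord β y) hα' x
    TraceEquiv I G _ (consElem G β (y * b) (consElem G α (x * a) t)) := consElem_comm hI _ _ t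
    TraceEquiv I G _ (actWord I G β y (actWord I G α x w)) :=
        (actWord_traceEquiv (hw.actWord α x) hβ' y).symm

theorem actWord_of_reduced_cons [Std.Symm I] [Std.Irrefl I] {a : Letter L G}
    {w : List (Letter L G)} (h : Reduced I G (a :: w)) :
    TraceEquiv I G (actWord I G a.1 a.2 w) (a :: w) := by
  obtain ⟨hw, ha⟩ := reduced_cons_iff.1 h
  have := actWord_traceEquiv hw (isSplit_one hw ha) a.2
  rwa [mul_one, consElem_of_ne_one a.2.2] at this

variable (I G) in
instance traceSetoid : Setoid {w : List (Letter L G) // Reduced I G w} :=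
  (Relation.EqvGen.setoid (TraceStep I G)).comap Subtype.val

variable (I G) in
abbrev ReducedTrace : Type := Quotient (traceSetoid I G)

variable (I G) in
noncomputable def nodeAction [Std.Symm I] [Std.Irrefl I] (α : L) :
    G α →* Function.End (ReducedTrace I G) where
  toFun g := Quotient.map (fun w => ⟨actWord I G α g w.1, w.2.actWord α g⟩)
    fun _ _ he => actWord_congr g (Subtype.property _) he
  map_one' := funext <| Quotient.ind fun w => Quotient.sound (actWord_one w.2 α)
  map_mul' g g' := funext <| Quotient.ind fun w => Quotient.sound (actWord_mul w.2 g g')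

theorem nodeAction_commute [Std.Symm I] [Std.Irrefl I] {α β : L} (hI : I α β)
    (x : G α) (y : G β) :
    Commute ((nodeAction I G α).toHomPerm x) ((nodeAction I G β).toHomPerm y) :=
  Equiv.ext <| Quotient.ind fun w => Quotient.sound (actWord_comm hI w.2 x y)

variable (I G) in
noncomputable def gpAction [Std.Symm I] [Std.Irrefl I] :
    GP I G →* Equiv.Perm (ReducedTrace I G) :=
  QuotientGroup.lift _ (Monoid.CoprodI.lift fun α => (nodeAction I G α).toHomPerm) <|
    Subgroup.normalClosure_le_normal <| by
      rintro _ ⟨α, β, x, y, hI, rfl⟩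
      rw [SetLike.mem_coe, MonoidHom.mem_ker, ← commutatorElement_def, map_commutatorElement,
        Monoid.CoprodI.lift_of, Monoid.CoprodI.lift_of, commutatorElement_eq_one_iff_commute]
      exact nodeAction_commute hI x y

theorem gpAction_evalWord [Std.Symm I] [Std.Irrefl I] {w : List (Letter L G)}
    (hw : Reduced I G w) :
    gpAction I G (evalWord I G w) ⟦⟨[], reduced_nil⟩⟧ = ⟦⟨w, hw⟩⟧ := by
  induction w with
  | nil => rfl
  | cons a w ih =>
    rw [evalWord_cons, map_mul, Equiv.Perm.mul_apply, ih (reduced_cons_iff.1 hw).1]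
    exact Quotient.sound (actWord_of_reduced_cons hw)

theorem exists_reduced_evalWord_eq [Std.Symm I] [Std.Irrefl I] (w : List (Letter L G)) :
    ∃ u, Reduced I G u ∧ evalWord I G u = evalWord I G w := by
  induction w with
  | nil => exact ⟨[], reduced_nil, rfl⟩
  | cons a w ih =>
    obtain ⟨u, hu, he⟩ := ih
    refine ⟨actWord I G a.1 a.2 u, hu.actWord _ _, ?_⟩
    rw [evalWord_actWord hu, he, evalWord_cons]

theorem traceEquiv_of_evalWord_eq [Std.Symm I] [Std.Irrefl I] {u v : List (Letter L G)}
    (hu : Reduced I G u) (hv : Reduced I G v) (h : evalWord I G u = evalWord I G v) :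
    TraceEquiv I G u v := by
  have := congrArg (gpAction I G · ⟦⟨[], reduced_nil⟩⟧) h
  simp only [gpAction_evalWord hu, gpAction_evalWord hv] at this
  exact Quotient.exact this

theorem word_problem_normal_forms_general
    {L : Type} (I : L → L → Prop) (G : L → Type) [∀ α, Group (G α)]
    (hirr : ∀ α, ¬ I α α) (hsym : ∀ α β, I α β → I β α) :
    (∀ w : List (Letter L G), ∃ u : List (Letter L G),
        Reduced I G u ∧ evalWord I G u = evalWord I G w) ∧
    (∀ u v : List (Letter L G), Reduced I G u → Reduced I G v →
        (evalWord I G u = evalWord I G v ↔ TraceEquiv I G u v)) := by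
  have : Std.Symm I := ⟨hsym⟩
  have : Std.Irrefl I := ⟨hirr⟩
  exact ⟨exists_reduced_evalWord_eq, fun u v hu hv =>
    ⟨traceEquiv_of_evalWord_eq hu hv, TraceEquiv.evalWord_eq⟩⟩

theorem word_problem_normal_forms
    {L : Type} [Finite L] (I : L → L → Prop) (G : L → Type) [∀ α, Group (G α)]
    (hirr : ∀ α, ¬ I α α) (hsym : ∀ α β, I α β → I β α) :
    (∀ w : List (Letter L G), ∃ u : List (Letter L G),
        Reduced I G u ∧ evalWord I G u = evalWord I G w) ∧
    (∀ u v : List (Letter L G), Reduced I G u → Reduced I G v →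
        (evalWord I G u = evalWord I G v ↔ TraceEquiv I G u v)) :=
  word_problem_normal_forms_general I G hirr hsym
end
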